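/- arXiv:1601.05420 — 4 statements merged into one kernel-verified Lean document; each statement's English description precedes it below -/
import Mathlib

section
/- Let 𝒳, 𝒴, 𝒮 be finite nonempty sets and let T assign to each i,k ∈ 𝒮, y ∈ 𝒴, x ∈ 𝒳 a nonnegative real T_{ik}^{y|x} with ∑_{k∈𝒮} ∑_{y∈𝒴} T_{ik}^{y|x} = 1 for every i ∈ 𝒮 and x ∈ 𝒳. For each i ∈ 𝒮 define the quantum causal state s_i as the vector in the real Euclidean space indexed by functions g : 𝒳 → 𝒴 × 𝒮 whose coordinate at g is ∏_{x∈𝒳} √(T_{i,(g x).2}^{(g x).1 | x}). Then the quantum causal states are pairwise orthogonal (⟨s_i, s_j⟩ = 0 for all i ≠ j) if and only if for every pair i ≠ j in 𝒮 there exists x ∈ 𝒳 such that T_{ik}^{y|x} · T_{jk}^{y|x} = 0 for all y ∈ 𝒴 and all k ∈ 𝒮. -/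
open scoped InnerProductSpace

/-! The causal states are product vectors, so `⟪s i, s j⟫ = ∏ₓ ∑_{y,k} √(T_{ik}^{y|x} T_{jk}^{y|x})`.
A product of reals vanishes iff one factor does, and a sum of nonnegative square roots
vanishes iff every radicand does. -/

theorem EuclideanSpace.inner_eq_prod_sum_of_apply_eq_prod {ι κ : Type*}
    [Fintype ι] [DecidableEq ι] [Fintype κ]
    {u v : EuclideanSpace ℝ (ι → κ)} {a b : ι → κ → ℝ}
    (hu : ∀ g, u g = ∏ x, a x (g x)) (hv : ∀ g, v g = ∏ x, b x (g x)) :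
    ⟪u, v⟫_ℝ = ∏ x, ∑ k, a x k * b x k := by
  rw [Finset.prod_univ_sum, Fintype.piFinset_univ, PiLp.inner_apply]
  refine Finset.sum_congr rfl fun g _ => ?_
  rw [real_inner_eq_re_inner, RCLike.inner_apply, hu, hv, RCLike.re_to_real, conj_trivial,
    mul_comm, Finset.prod_mul_distrib]

theorem Real.sum_sqrt_mul_sqrt_eq_zero_iff {κ : Type*} [Fintype κ] {a b : κ → ℝ}
    (ha : ∀ k, 0 ≤ a k) (hb : ∀ k, 0 ≤ b k) :
    ∑ k, √(a k) * √(b k) = 0 ↔ ∀ k, a k * b k = 0 := by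
  simp_rw [← Real.sqrt_mul (ha _)]
  rw [Finset.sum_eq_zero_iff_of_nonneg fun k _ => Real.sqrt_nonneg _]
  simp [Real.sqrt_eq_zero (mul_nonneg (ha _) (hb _))]

theorem stmt1_general {𝒳 𝒴 𝒮 : Type*} [Fintype 𝒳] [Fintype 𝒴] [Fintype 𝒮]
    [DecidableEq 𝒳]
    (T : 𝒮 → 𝒮 → 𝒴 → 𝒳 → ℝ) (hT : ∀ i k y x, 0 ≤ T i k y x)
    (s : 𝒮 → EuclideanSpace ℝ (𝒳 → 𝒴 × 𝒮))
    (hs : ∀ i g, s i g = ∏ x : 𝒳, Real.sqrt (T i (g x).2 (g x).1 x)) :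
    (∀ i j : 𝒮, i ≠ j → ⟪s i, s j⟫_ℝ = 0) ↔
      (∀ i j : 𝒮, i ≠ j →
        ∃ x : 𝒳, ∀ y : 𝒴, ∀ k : 𝒮, T i k y x * T j k y x = 0) := by
  have orthogonal_iff (i j : 𝒮) :
      ⟪s i, s j⟫_ℝ = 0 ↔ ∃ x : 𝒳, ∀ y : 𝒴, ∀ k : 𝒮, T i k y x * T j k y x = 0 := by
    rw [EuclideanSpace.inner_eq_prod_sum_of_apply_eq_prod (a := fun x p => √(T i p.2 p.1 x))
      (b := fun x p => √(T j p.2 p.1 x)) (hs i) (hs j), Finset.prod_eq_zero_iff]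
    simp only [Finset.mem_univ, true_and]
    exact exists_congr fun x =>
      (Real.sum_sqrt_mul_sqrt_eq_zero_iff (a := fun p => T i p.2 p.1 x)
        (b := fun p => T j p.2 p.1 x) (fun _ => hT _ _ _ _) (fun _ => hT _ _ _ _)).trans
        Prod.forall
  simp only [orthogonal_iff]

/-- For stochastic transition elements `T`, the quantum causal states
`s i`, with coordinate `∏_x √(T_{i,(g x).2}^{(g x).1 | x})` at `g : 𝒳 → 𝒴 × 𝒮`,
are pairwise orthogonal iff for every pair `i ≠ j` there exists an input `x` with
`T_{ik}^{y|x} T_{jk}^{y|x} = 0` for all `y, k`. -/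
theorem stmt1 {𝒳 𝒴 𝒮 : Type*} [Fintype 𝒳] [Fintype 𝒴] [Fintype 𝒮]
    [DecidableEq 𝒳] [DecidableEq 𝒴] [DecidableEq 𝒮]
    [Nonempty 𝒳] [Nonempty 𝒴] [Nonempty 𝒮]
    (T : 𝒮 → 𝒮 → 𝒴 → 𝒳 → ℝ) (hT : ∀ i k y x, 0 ≤ T i k y x)
    (hstoch : ∀ i x, ∑ k : 𝒮, ∑ y : 𝒴, T i k y x = 1)
    (s : 𝒮 → EuclideanSpace ℝ (𝒳 → 𝒴 × 𝒮))
    (hs : ∀ i g, s i g = ∏ x : 𝒳, Real.sqrt (T i (g x).2 (g x).1 x)) :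
    (∀ i j : 𝒮, i ≠ j → ⟪s i, s j⟫_ℝ = 0) ↔
      (∀ i j : 𝒮, i ≠ j →
        ∃ x : 𝒳, ∀ y : 𝒴, ∀ k : 𝒮, T i k y x * T j k y x = 0) :=
  stmt1_general T hT s hs
end

section
/- Let ι be a finite nonempty index set, let v : ι → ℂ^d be unit vectors, and let p : ι → ℝ satisfy p_i > 0 for all i and ∑_i p_i = 1. Let ρ be the d × d complex matrix ρ = ∑_i p_i · v_i v_i† (the weighted sum of outer products), which is Hermitian, and let μ_1, …, μ_d be its eigenvalues (with multiplicity). If there exist i ≠ j with ⟨v_i, v_j⟩ ≠ 0, then −∑_k μ_k log μ_k < −∑_i p_i log p_i (with the convention 0 log 0 = 0). -/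
/-!
Let `e` be an eigenbasis of `ρ` with eigenvalues `μ`, and put `D i k = p i * ‖⟪e k, v i⟫‖²`.
Its rows sum to `p i` (Parseval) and its columns to `μ k` (evaluate the quadratic form of `ρ`
at `e k`). The operator inequality `p i • |v i⟩⟨v i| ≤ ρ`, tested on `ρ⁺ v i`, gives the
Bessel-type bound `p i * ∑ k, ‖⟪e k, v i⟫‖² / μ k ≤ 1`. Then
`H(p) - S(ρ) = ∑ D i k * log (μ k / p i) ≥ ∑ D i k * (1 - p i / μ k) ≥ 0`, and the first
inequality is strict as soon as `μ k ≠ p i` for some `D i k > 0`. If that failed, `v i` would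
lie in the `p i`-eigenspace of `ρ`, so `⟪v i, ρ v i⟫ = p i`; but this quadratic form equals
`∑ j, p j * ‖⟪v j, v i⟫‖²`, which exceeds `p i` once some `v j` is not orthogonal to `v i`.
-/

open scoped InnerProductSpace
open Finset

lemma sub_mul_div_le_mul_sub_log {D p μ : ℝ} (hD : 0 ≤ D) (hDp : D ≤ p) (hDμ : D ≤ μ) :
    D - D * p / μ ≤ D * (Real.log μ - Real.log p) := by
  rcases hD.eq_or_lt with rfl | hD
  · simp
  have hp := hD.trans_le hDp
  have hμ := hD.trans_le hDμ
  have hlog := Real.log_le_sub_one_of_pos (div_pos hp hμ)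
  rw [Real.log_div hp.ne' hμ.ne'] at hlog
  have : D * (p / μ - 1) = D * p / μ - D := by field_simp
  nlinarith

lemma sub_mul_div_lt_mul_sub_log {D p μ : ℝ} (hD : 0 < D) (hDp : D ≤ p) (hDμ : D ≤ μ)
    (hμp : μ ≠ p) : D - D * p / μ < D * (Real.log μ - Real.log p) := by
  have hp := hD.trans_le hDp
  have hμ := hD.trans_le hDμ
  have hlog := Real.log_lt_sub_one_of_pos (div_pos hp hμ)
    (by rwa [ne_eq, div_eq_one_iff_eq hμ.ne', eq_comm])
  rw [Real.log_div hp.ne' hμ.ne'] at hlog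
  have : D * (p / μ - 1) = D * p / μ - D := by field_simp
  nlinarith

/-- `D i k * p i / μ k` is read with `x / 0 = 0`, which is harmless: `μ k = 0` forces
`D i k = 0`. -/
theorem sum_mul_log_lt_sum_mul_log_of_coupling {ι κ : Type*} [Fintype ι] [Fintype κ]
    {D : ι → κ → ℝ} {p : ι → ℝ} {μ : κ → ℝ} (hD : ∀ i k, 0 ≤ D i k)
    (hrow : ∀ i, ∑ k, D i k = p i) (hcol : ∀ k, ∑ i, D i k = μ k)
    (hbessel : ∀ i, ∑ k, D i k * p i / μ k ≤ p i) (hne : ∃ i k, 0 < D i k ∧ μ k ≠ p i) :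
    ∑ i, p i * Real.log (p i) < ∑ k, μ k * Real.log (μ k) := by
  obtain ⟨i₀, k₀, hD₀, hne₀⟩ := hne
  have hDp : ∀ i k, D i k ≤ p i := fun i k =>
    hrow i ▸ single_le_sum (fun k _ => hD i k) (mem_univ k)
  have hDμ : ∀ i k, D i k ≤ μ k := fun i k =>
    hcol k ▸ single_le_sum (fun i _ => hD i k) (mem_univ i)
  have hterm := fun i k => sub_mul_div_le_mul_sub_log (hD i k) (hDp i k) (hDμ i k)
  have hgap : ∑ i, ∑ k, (D i k - D i k * p i / μ k) <
      ∑ i, ∑ k, D i k * (Real.log (μ k) - Real.log (p i)) :=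
    sum_lt_sum (fun i _ => sum_le_sum fun k _ => hterm i k)
      ⟨i₀, mem_univ _, sum_lt_sum (fun k _ => hterm i₀ k)
        ⟨k₀, mem_univ _, sub_mul_div_lt_mul_sub_log hD₀ (hDp i₀ k₀) (hDμ i₀ k₀) hne₀⟩⟩
  have hlower : 0 ≤ ∑ i, ∑ k, (D i k - D i k * p i / μ k) :=
    sum_nonneg fun i _ => by
      rw [sum_sub_distrib, hrow]
      exact sub_nonneg.mpr (hbessel i)
  have hupper : ∑ i, ∑ k, D i k * (Real.log (μ k) - Real.log (p i)) =
      ∑ k, μ k * Real.log (μ k) - ∑ i, p i * Real.log (p i) := by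
    simp only [mul_sub, sum_sub_distrib]
    rw [sum_comm]
    simp only [← sum_mul, hrow, hcol]
  linarith

lemma lt_sum_mul_norm_inner_sq {E ι : Type*} [NormedAddCommGroup E] [InnerProductSpace ℂ E]
    [Fintype ι] {v : ι → E} (hv : ∀ i, ‖v i‖ = 1) {p : ι → ℝ} (hp : ∀ i, 0 < p i) {i j : ι}
    (hij : i ≠ j) (hvij : ⟪v i, v j⟫_ℂ ≠ 0) :
    p i < ∑ m, p m * ‖⟪v m, v i⟫_ℂ‖ ^ 2 :=
  calc p i = p i * ‖⟪v i, v i⟫_ℂ‖ ^ 2 := by simp [hv]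
    _ < p i * ‖⟪v i, v i⟫_ℂ‖ ^ 2 + p j * ‖⟪v j, v i⟫_ℂ‖ ^ 2 := by
      have : 0 < ‖⟪v j, v i⟫_ℂ‖ := by rwa [norm_inner_symm, norm_pos_iff]
      have := hp j
      exact lt_add_of_pos_right _ (by positivity)
    _ ≤ ∑ m, p m * ‖⟪v m, v i⟫_ℂ‖ ^ 2 :=
      add_le_sum (f := fun m => p m * ‖⟪v m, v i⟫_ℂ‖ ^ 2)
        (fun m _ => mul_nonneg (hp m).le (sq_nonneg _)) (mem_univ i) (mem_univ j) hij

section Spectral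

variable {𝕜 : Type*} [RCLike 𝕜] {n : Type*} [Fintype n] [DecidableEq n]

lemma Matrix.toEuclideanLin_of_mul_star (v x : EuclideanSpace 𝕜 n) :
    toEuclideanLin (Matrix.of fun a b => v a * star (v b)) x = ⟪v, x⟫_𝕜 • v := by
  rw [show (Matrix.of fun a b => v a * star (v b)) = vecMulVec v (star v) from rfl,
    ← InnerProductSpace.symm_toEuclideanLin_rankOne, LinearEquiv.apply_symm_apply]
  rfl

lemma inner_toEuclideanLin_sum_smul_of_mul_star {ι : Type*} [Fintype ι] (p : ι → ℝ)
    (v : ι → EuclideanSpace 𝕜 n) (x : EuclideanSpace 𝕜 n) :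
    ⟪x, Matrix.toEuclideanLin
        (∑ i, p i • Matrix.of fun a b => v i a * star (v i b)) x⟫_𝕜 =
      ((∑ i, p i * ‖⟪v i, x⟫_𝕜‖ ^ 2 : ℝ) : 𝕜) := by
  simp only [RCLike.real_smul_eq_coe_smul (K := 𝕜), map_sum, map_smul, LinearMap.sum_apply,
    LinearMap.smul_apply, Matrix.toEuclideanLin_of_mul_star, inner_sum, inner_smul_right]
  push_cast
  refine sum_congr rfl fun i _ => ?_
  rw [← inner_conj_symm x, ← RCLike.conj_mul]
  ring

namespace Matrix.IsHermitian

variable {A : Matrix n n 𝕜} (hA : A.IsHermitian)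
include hA

lemma toEuclideanLin_eigenvectorBasis (k : n) :
    toEuclideanLin A (hA.eigenvectorBasis k) =
      (hA.eigenvalues k : 𝕜) • hA.eigenvectorBasis k := by
  rw [toLpLin_apply, hA.mulVec_eigenvectorBasis, WithLp.toLp_smul, WithLp.toLp_ofLp,
    RCLike.real_smul_eq_coe_smul (K := 𝕜)]

lemma inner_eigenvectorBasis_toEuclideanLin (k : n) :
    ⟪hA.eigenvectorBasis k, toEuclideanLin A (hA.eigenvectorBasis k)⟫_𝕜 = hA.eigenvalues k := by
  rw [hA.toEuclideanLin_eigenvectorBasis, inner_smul_right, OrthonormalBasis.inner_eq_one,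
    mul_one]

lemma inner_toEuclideanLin_self (x : EuclideanSpace 𝕜 n) :
    ⟪x, toEuclideanLin A x⟫_𝕜 =
      ((∑ k, hA.eigenvalues k * ‖⟪hA.eigenvectorBasis k, x⟫_𝕜‖ ^ 2 : ℝ) : 𝕜) := by
  rw [← hA.eigenvectorBasis.sum_inner_mul_inner]
  push_cast
  refine sum_congr rfl fun k _ => ?_
  rw [← (isSymmetric_toEuclideanLin_iff.mpr hA) _ x, toEuclideanLin_eigenvectorBasis,
    inner_smul_left, RCLike.conj_ofReal, ← inner_conj_symm x, ← RCLike.conj_mul]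
  ring

lemma re_inner_toEuclideanLin_self_of_eigenvalues_eq {x : EuclideanSpace 𝕜 n} {c : ℝ}
    (h : ∀ k, ⟪hA.eigenvectorBasis k, x⟫_𝕜 ≠ 0 → hA.eigenvalues k = c) :
    RCLike.re ⟪x, toEuclideanLin A x⟫_𝕜 = c * ‖x‖ ^ 2 := by
  rw [hA.inner_toEuclideanLin_self, RCLike.ofReal_re, ← hA.eigenvectorBasis.sum_sq_norm_inner_right,
    mul_sum]
  refine sum_congr rfl fun k _ => ?_
  by_cases hk : ⟪hA.eigenvectorBasis k, x⟫_𝕜 = 0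
  · simp [hk]
  · rw [h k hk]

/-- If `c • |y⟩⟨y| ≤ A`, then `c * ⟪y, A⁺ y⟫ ≤ 1`, where `A⁺` is the Moore–Penrose inverse
(the junk value `1 / 0 = 0` discards the kernel of `A`). -/
lemma mul_sum_norm_inner_sq_div_eigenvalues_le_one {y : EuclideanSpace 𝕜 n} {c : ℝ}
    (hc : 0 ≤ c) (hle : ∀ x, c * ‖⟪y, x⟫_𝕜‖ ^ 2 ≤ RCLike.re ⟪x, toEuclideanLin A x⟫_𝕜) :
    c * ∑ k, ‖⟪hA.eigenvectorBasis k, y⟫_𝕜‖ ^ 2 / hA.eigenvalues k ≤ 1 := by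
  set e := hA.eigenvectorBasis
  set μ := hA.eigenvalues
  set s := ∑ k, ‖⟪e k, y⟫_𝕜‖ ^ 2 / μ k
  have hμ : ∀ k, 0 ≤ μ k := fun k => by
    have h := hle (e k)
    rw [hA.inner_eigenvectorBasis_toEuclideanLin, RCLike.ofReal_re] at h
    exact (mul_nonneg hc (sq_nonneg _)).trans h
  have hs : 0 ≤ s := sum_nonneg fun k _ => div_nonneg (sq_nonneg _) (hμ k)
  set x := e.repr.symm (WithLp.toLp 2 fun k => ⟪e k, y⟫_𝕜 / μ k)
  have hx : ∀ k, ⟪e k, x⟫_𝕜 = ⟪e k, y⟫_𝕜 / μ k := fun k => by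
    rw [← e.repr_apply_apply]
    simp [x]
  have hquad : RCLike.re ⟪x, toEuclideanLin A x⟫_𝕜 = s := by
    rw [hA.inner_toEuclideanLin_self, RCLike.ofReal_re]
    refine sum_congr rfl fun k _ => ?_
    rw [hx, norm_div, RCLike.norm_ofReal, div_pow, sq_abs]
    rcases eq_or_ne (μ k) 0 with h0 | h0
    · simp [h0]
    · field_simp
      exact mul_comm _ _
  have hyx : ⟪y, x⟫_𝕜 = s := by
    rw [← e.sum_inner_mul_inner]
    simp only [s, RCLike.ofReal_sum, RCLike.ofReal_div, RCLike.ofReal_pow]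
    refine sum_congr rfl fun k _ => ?_
    rw [hx, ← inner_conj_symm y, mul_div_assoc', RCLike.conj_mul]
  have h := hle x
  rw [hquad, hyx, RCLike.norm_ofReal, sq_abs] at h
  rcases hs.eq_or_lt with h0 | hpos
  · simp [← h0]
  · nlinarith

end Matrix.IsHermitian

end Spectral

theorem stmt4_general {ι : Type*} [Fintype ι] {d : ℕ}
    (v : ι → EuclideanSpace ℂ (Fin d)) (hv : ∀ i, ‖v i‖ = 1)
    (p : ι → ℝ) (hp : ∀ i, 0 < p i)
    (ρ : Matrix (Fin d) (Fin d) ℂ)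
    (hρdef : ρ = ∑ i, (p i : ℂ) • Matrix.of (fun a b => v i a * star (v i b)))
    (hρ : ρ.IsHermitian)
    (hnonorth : ∃ i j : ι, i ≠ j ∧ ⟪v i, v j⟫_ℂ ≠ 0) :
    -∑ k, hρ.eigenvalues k * Real.log (hρ.eigenvalues k) <
      -∑ i, p i * Real.log (p i) := by
  obtain ⟨i₀, j₀, hij, hvij⟩ := hnonorth
  set e := hρ.eigenvectorBasis
  have hquad : ∀ x, RCLike.re ⟪x, Matrix.toEuclideanLin ρ x⟫_ℂ = ∑ i, p i * ‖⟪v i, x⟫_ℂ‖ ^ 2 :=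
    fun x => by
      simp only [hρdef, Complex.coe_smul]
      rw [inner_toEuclideanLin_sum_smul_of_mul_star, RCLike.ofReal_re]
  refine neg_lt_neg (sum_mul_log_lt_sum_mul_log_of_coupling
    (D := fun i k => p i * ‖⟪e k, v i⟫_ℂ‖ ^ 2) (fun i k => by have := hp i; positivity)
    (fun i => by rw [← mul_sum, e.sum_sq_norm_inner_right, hv, one_pow, mul_one])
    (fun k => ?_) (fun i => ?_) ?_)
  · have h := hquad (e k)
    rw [hρ.inner_eigenvectorBasis_toEuclideanLin, RCLike.ofReal_re] at h
    simp_rw [norm_inner_symm (e k)]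
    exact h.symm
  · have hbessel := hρ.mul_sum_norm_inner_sq_div_eigenvalues_le_one (hp i).le fun x =>
      (hquad x).symm ▸ single_le_sum (f := fun m => p m * ‖⟪v m, x⟫_ℂ‖ ^ 2)
        (fun m _ => mul_nonneg (hp m).le (sq_nonneg _)) (mem_univ i)
    calc ∑ k, p i * ‖⟪e k, v i⟫_ℂ‖ ^ 2 * p i / hρ.eigenvalues k
        = p i * (p i * ∑ k, ‖⟪e k, v i⟫_ℂ‖ ^ 2 / hρ.eigenvalues k) := by
          simp only [mul_sum]
          exact sum_congr rfl fun k _ => by ring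
      _ ≤ p i := mul_le_of_le_one_right (hp i).le hbessel
  · by_contra! heig
    have hself := hρ.re_inner_toEuclideanLin_self_of_eigenvalues_eq (x := v i₀) (c := p i₀)
      fun k hk => heig i₀ k (mul_pos (hp i₀) (by positivity))
    rw [hquad, hv, one_pow, mul_one] at hself
    exact (lt_sum_mul_norm_inner_sq hv hp hij hvij).ne' hself

/-- For unit vectors `v i` in `ℂ^d` mixed with strictly positive
weights `p i` summing to 1, if two of the vectors are non-orthogonal then the von
Neumann entropy of `ρ = ∑ i, p i • |v i⟩⟨v i|` is strictly smaller than the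
Shannon entropy of `p`. -/
theorem stmt4 {ι : Type*} [Fintype ι] [Nonempty ι] {d : ℕ}
    (v : ι → EuclideanSpace ℂ (Fin d)) (hv : ∀ i, ‖v i‖ = 1)
    (p : ι → ℝ) (hp : ∀ i, 0 < p i) (hpsum : ∑ i, p i = 1)
    (ρ : Matrix (Fin d) (Fin d) ℂ)
    (hρdef : ρ = ∑ i, (p i : ℂ) • Matrix.of (fun a b => v i a * star (v i b)))
    (hρ : ρ.IsHermitian)
    (hnonorth : ∃ i j : ι, i ≠ j ∧ ⟪v i, v j⟫_ℂ ≠ 0) :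
    -∑ k, hρ.eigenvalues k * Real.log (hρ.eigenvalues k) <
      -∑ i, p i * Real.log (p i) :=
  stmt4_general v hv p hp ρ hρdef hρ hnonorth
end

section
/- Let ι be a finite nonempty index set, let v : ι → ℂ^d be unit vectors, and let p : ι → ℝ satisfy p_i ≥ 0 for all i and ∑_i p_i = 1. Let ρ be the d × d complex matrix ρ = ∑_i p_i · v_i v_i†, which is Hermitian, and let μ_1, …, μ_d be its eigenvalues (with multiplicity). Then −∑_k μ_k log μ_k ≤ −∑_i p_i log p_i (with the convention 0 log 0 = 0). -/
/-!
Let `e k` be an orthonormal eigenbasis of `ρ` with eigenvalues `μ k`, and put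
`r i k = p i * ‖⟪e k, v i⟫‖ ^ 2`. Expanding `⟪e k, ρ e l⟫` shows that the columns of `r` sum to
`μ`, and Parseval shows that its rows sum to `p`. Moreover the vectors
`w k = (√(p i) * ⟪v i, e k⟫)ᵢ` are pairwise orthogonal with `‖w k‖ ^ 2 = μ k`, so Bessel's
inequality against the coordinate vectors gives `∑ k, r i k / μ k ≤ 1`. Hence `p = B μ` for a
matrix `B i k = r i k / μ k` whose columns sum to `1` and whose rows sum to at most `1`, and the
concavity of `negMulLog`, which vanishes at `0`, turns this into `∑ negMulLog μ ≤ ∑ negMulLog p`.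
-/

open Finset Matrix

namespace Real

theorem sum_mul_negMulLog_le_negMulLog_sum {κ : Type*} (s : Finset κ) {w x : κ → ℝ}
    (hw : ∀ k ∈ s, 0 ≤ w k) (hw₁ : ∑ k ∈ s, w k ≤ 1) (hx : ∀ k ∈ s, 0 ≤ x k) :
    ∑ k ∈ s, w k * negMulLog (x k) ≤ negMulLog (∑ k ∈ s, w k * x k) := by
  -- the missing weight `1 - ∑ w` goes to the point `0`, where `negMulLog` vanishes
  simpa using concaveOn_negMulLog.map_add_sum_le hw
    (by ring : 1 - ∑ k ∈ s, w k + ∑ k ∈ s, w k = 1) hx (sub_nonneg.2 hw₁) (Set.mem_Ici.2 le_rfl)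

theorem sum_negMulLog_le_of_coupling {ι κ : Type*} [Fintype ι] [Fintype κ]
    {p : ι → ℝ} {μ : κ → ℝ} {r : ι → κ → ℝ} (hr : ∀ i k, 0 ≤ r i k)
    (hcol : ∀ k, ∑ i, r i k = μ k) (hrow : ∀ i, ∑ k, r i k = p i)
    (hrow_div : ∀ i, ∑ k, r i k / μ k ≤ 1) :
    ∑ k, negMulLog (μ k) ≤ ∑ i, negMulLog (p i) := by
  have hμ k : 0 ≤ μ k := hcol k ▸ sum_nonneg fun i _ ↦ hr i k
  -- a column with `μ k = 0` vanishes, so the junk value `r i k / 0 = 0` is harmless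
  have hr_eq i k : r i k / μ k * μ k = r i k := by
    rcases (hμ k).eq_or_lt with h | h
    · rw [← h, mul_zero, eq_comm]
      exact (sum_eq_zero_iff_of_nonneg fun j _ ↦ hr j k).1 (h ▸ hcol k) i (mem_univ i)
    · exact div_mul_cancel₀ _ h.ne'
  calc ∑ k, negMulLog (μ k) = ∑ k, (∑ i, r i k / μ k) * negMulLog (μ k) := by
        refine sum_congr rfl fun k _ ↦ ?_
        rw [← sum_div, hcol]
        rcases eq_or_ne (μ k) 0 with h | h
        · simp [h]
        · rw [div_self h, one_mul]
    _ = ∑ i, ∑ k, r i k / μ k * negMulLog (μ k) := by simp only [sum_mul]; exact sum_comm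
    _ ≤ ∑ i, negMulLog (p i) := sum_le_sum fun i _ ↦ by
        simpa only [hr_eq, hrow] using sum_mul_negMulLog_le_negMulLog_sum univ
          (fun k _ ↦ div_nonneg (hr i k) (hμ k)) (hrow_div i) (fun k _ ↦ hμ k)

end Real

section InnerProductSpace

variable {𝕜 E : Type*} [RCLike 𝕜] [NormedAddCommGroup E] [InnerProductSpace 𝕜 E]

theorem sum_norm_inner_sq_div_norm_sq_le {κ : Type*} [Fintype κ] {w : κ → E}
    (hw : Pairwise fun k l ↦ inner 𝕜 (w k) (w l) = 0) (x : E) :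
    ∑ k, ‖inner 𝕜 (w k) x‖ ^ 2 / ‖w k‖ ^ 2 ≤ ‖x‖ ^ 2 := by
  classical
  let u : {k // w k ≠ 0} → E := fun k ↦ ((‖w k‖ : 𝕜)⁻¹) • w k
  have hu : Orthonormal 𝕜 u := by
    refine ⟨fun k ↦ ?_, fun k l hkl ↦ ?_⟩
    · simp [u, norm_smul, k.2]
    · simp [u, inner_smul_left, inner_smul_right, hw (Subtype.coe_ne_coe.2 hkl)]
  have hterm (k : {k // w k ≠ 0}) :
      ‖inner 𝕜 (u k) x‖ ^ 2 = ‖inner 𝕜 (w k) x‖ ^ 2 / ‖w k‖ ^ 2 := by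
    simp [u, inner_smul_left, div_eq_inv_mul, mul_pow]
  have hzero : ∑ k : {k // ¬w k ≠ 0}, ‖inner 𝕜 (w k) x‖ ^ 2 / ‖w k‖ ^ 2 = 0 :=
    sum_eq_zero fun k _ ↦ by simp [not_not.1 k.2]
  rw [← Fintype.sum_subtype_add_sum_subtype (fun k ↦ w k ≠ 0), hzero, add_zero]
  simpa only [hterm] using hu.sum_inner_products_le x (s := univ)

theorem sum_mul_norm_inner_sq_div_le_one {ι κ : Type*} [Fintype ι] [Fintype κ] {p : ι → ℝ}
    (hp : ∀ i, 0 ≤ p i) {v : ι → E} {e : κ → E}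
    (horth : Pairwise fun k l ↦ ∑ i, (p i : 𝕜) * inner 𝕜 (e k) (v i) * inner 𝕜 (v i) (e l) = 0)
    (i : ι) :
    ∑ k, p i * ‖inner 𝕜 (e k) (v i)‖ ^ 2 / ∑ j, p j * ‖inner 𝕜 (e k) (v j)‖ ^ 2 ≤ 1 := by
  classical
  let w (k : κ) : EuclideanSpace 𝕜 ι := WithLp.toLp 2 fun j ↦ (√(p j) : 𝕜) * inner 𝕜 (v j) (e k)
  have hsqrt j : (√(p j) : 𝕜) * (√(p j) : 𝕜) = p j := by
    rw [← RCLike.ofReal_mul, Real.mul_self_sqrt (hp j)]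
  have hinner k l : inner 𝕜 (w k) (w l) =
      ∑ j, (p j : 𝕜) * inner 𝕜 (e k) (v j) * inner 𝕜 (v j) (e l) := by
    simp only [w, EuclideanSpace.inner_toLp_toLp, dotProduct, Pi.star_apply, star_mul',
      RCLike.star_def, RCLike.conj_ofReal, inner_conj_symm, ← hsqrt]
    exact sum_congr rfl fun j _ ↦ by ring
  have hnorm k : ‖w k‖ ^ 2 = ∑ j, p j * ‖inner 𝕜 (e k) (v j)‖ ^ 2 := by
    simp [w, EuclideanSpace.norm_sq_eq, mul_pow, Real.sq_sqrt (hp _), norm_inner_symm]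
  have hcoord k : ‖inner 𝕜 (w k) (EuclideanSpace.single i 1)‖ ^ 2 =
      p i * ‖inner 𝕜 (e k) (v i)‖ ^ 2 := by
    simp [w, EuclideanSpace.inner_single_right, mul_pow, Real.sq_sqrt (hp _), norm_inner_symm]
  simpa [hcoord, hnorm] using
    sum_norm_inner_sq_div_norm_sq_le (fun k l hkl ↦ (hinner k l).trans (horth hkl))
      (EuclideanSpace.single i (1 : 𝕜))

end InnerProductSpace

section Matrix

variable {𝕜 n : Type*} [RCLike 𝕜] [Fintype n]

theorem Matrix.IsHermitian.inner_eigenvectorBasis_mulVec [DecidableEq n] {A : Matrix n n 𝕜}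
    (hA : A.IsHermitian) (k l : n) :
    inner 𝕜 (hA.eigenvectorBasis k) (WithLp.toLp 2 (A *ᵥ hA.eigenvectorBasis l)) =
      if k = l then (hA.eigenvalues k : 𝕜) else 0 := by
  rw [hA.mulVec_eigenvectorBasis, RCLike.real_smul_eq_coe_smul (K := 𝕜), WithLp.toLp_smul,
    WithLp.toLp_ofLp, inner_smul_right, orthonormal_iff_ite.1 hA.eigenvectorBasis.orthonormal]
  split_ifs with h <;> simp [h]

theorem toLp_of_mul_star_mulVec (v y : EuclideanSpace 𝕜 n) :
    WithLp.toLp 2 ((Matrix.of fun a b ↦ v a * star (v b)) *ᵥ y) = inner 𝕜 v y • v := by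
  ext a
  simp [mulVec, dotProduct, PiLp.inner_apply, mul_sum, mul_comm, mul_left_comm]

theorem inner_toLp_sum_smul_of_mul_star_mulVec {ι : Type*} [Fintype ι] (c : ι → 𝕜)
    (v : ι → EuclideanSpace 𝕜 n) (x y : EuclideanSpace 𝕜 n) :
    inner 𝕜 x (WithLp.toLp 2 ((∑ i, c i • Matrix.of fun a b ↦ v i a * star (v i b)) *ᵥ y)) =
      ∑ i, c i * inner 𝕜 x (v i) * inner 𝕜 (v i) y := by
  simp only [Matrix.sum_mulVec, smul_mulVec, WithLp.toLp_sum, WithLp.toLp_smul,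
    toLp_of_mul_star_mulVec, inner_sum, inner_smul_right]
  exact sum_congr rfl fun i _ ↦ by ring

end Matrix

theorem stmt5_general {ι : Type*} [Fintype ι] {d : ℕ}
    (v : ι → EuclideanSpace ℂ (Fin d)) (hv : ∀ i, ‖v i‖ = 1)
    (p : ι → ℝ) (hp : ∀ i, 0 ≤ p i)
    (ρ : Matrix (Fin d) (Fin d) ℂ)
    (hρdef : ρ = ∑ i, (p i : ℂ) • Matrix.of (fun a b => v i a * star (v i b)))
    (hρ : ρ.IsHermitian) :
    -∑ k, hρ.eigenvalues k * Real.log (hρ.eigenvalues k) ≤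
      -∑ i, p i * Real.log (p i) := by
  set e := hρ.eigenvectorBasis
  have hdiag k l : ∑ i, (p i : ℂ) * inner ℂ (e k) (v i) * inner ℂ (v i) (e l) =
      if k = l then (hρ.eigenvalues k : ℂ) else 0 := by
    rw [← inner_toLp_sum_smul_of_mul_star_mulVec, ← hρdef]
    exact hρ.inner_eigenvectorBasis_mulVec k l
  have hcol k : ∑ i, p i * ‖inner ℂ (e k) (v i)‖ ^ 2 = hρ.eigenvalues k := by
    have h := hdiag k k
    simp only [mul_assoc, ← inner_conj_symm (v _) (e k), RCLike.mul_conj, if_pos] at h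
    apply RCLike.ofReal_injective (K := ℂ)
    push_cast
    exact h
  have hrow i : ∑ k, p i * ‖inner ℂ (e k) (v i)‖ ^ 2 = p i := by
    rw [← mul_sum, e.sum_sq_norm_inner_right, hv, one_pow, mul_one]
  have hbessel i : ∑ k, p i * ‖inner ℂ (e k) (v i)‖ ^ 2 / hρ.eigenvalues k ≤ 1 := by
    simpa only [hcol] using sum_mul_norm_inner_sq_div_le_one hp
      (fun k l hkl ↦ (hdiag k l).trans (if_neg hkl)) i
  simpa only [Real.negMulLog, neg_mul, sum_neg_distrib] using
    Real.sum_negMulLog_le_of_coupling (fun i k ↦ mul_nonneg (hp i) (sq_nonneg _)) hcol hrow hbessel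

/-- For unit vectors `v i` in `ℂ^d` mixed with nonnegative weights
`p i` summing to 1, the von Neumann entropy of `ρ = ∑ i, p i • |v i⟩⟨v i|` is at
most the Shannon entropy of `p`. -/
theorem stmt5 {ι : Type*} [Fintype ι] [Nonempty ι] {d : ℕ}
    (v : ι → EuclideanSpace ℂ (Fin d)) (hv : ∀ i, ‖v i‖ = 1)
    (p : ι → ℝ) (hp : ∀ i, 0 ≤ p i) (hpsum : ∑ i, p i = 1)
    (ρ : Matrix (Fin d) (Fin d) ℂ)
    (hρdef : ρ = ∑ i, (p i : ℂ) • Matrix.of (fun a b => v i a * star (v i b)))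
    (hρ : ρ.IsHermitian) :
    -∑ k, hρ.eigenvalues k * Real.log (hρ.eigenvalues k) ≤
      -∑ i, p i * Real.log (p i) :=
  stmt5_general v hv p hp ρ hρdef hρ
end

section
/- Let r ∈ ℝ with 0 ≤ r ≤ 1, and let H denote the binary entropy function H(t) = −t log t − (1−t) log(1−t). Then for every w ∈ [0,1], H((1 + √(1 − 4w(1−w)(1−r)))/2) ≤ H((1 + √r)/2); that is, over all mixing weights w the binary entropy of the larger eigenvalue of the mixture is maximized at w = 1/2. -/
/-- For `0 ≤ r ≤ 1` and the binary entropy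
`H t = -t log t - (1-t) log (1-t)`, for every mixing weight `w ∈ [0,1]` we have
`H((1 + √(1 - 4w(1-w)(1-r)))/2) ≤ H((1 + √r)/2)`: the entropy of the larger
eigenvalue of the mixture is maximized at `w = 1/2`. -/
theorem stmt11 (r : ℝ) (hr0 : 0 ≤ r) (hr1 : r ≤ 1)
    (H : ℝ → ℝ)
    (hH : ∀ t : ℝ, H t = -t * Real.log t - (1 - t) * Real.log (1 - t)) :
    ∀ w ∈ Set.Icc (0:ℝ) 1,
      H ((1 + Real.sqrt (1 - 4 * w * (1 - w) * (1 - r))) / 2) ≤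
        H ((1 + Real.sqrt r) / 2) := by
  have hHb : ∀ t : ℝ, H t = Real.binEntropy t := by
    intro t
    rw [hH t, Real.binEntropy, Real.log_inv, Real.log_inv]
    ring
  intro w hw
  obtain ⟨hw0, hw1⟩ := hw
  set x := 1 - 4 * w * (1 - w) * (1 - r) with hx
  have hww : 0 ≤ 4 * w * (1 - w) * (1 - r) := by
    have : 0 ≤ w * (1 - w) := mul_nonneg hw0 (by linarith)
    nlinarith
  have hrx : r ≤ x := by nlinarith [sq_nonneg (2*w - 1)]
  have hx1 : x ≤ 1 := by linarith
  have hsr1 : Real.sqrt r ≤ 1 := by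
    rw [show (1:ℝ) = Real.sqrt 1 by simp]
    exact Real.sqrt_le_sqrt hr1
  have hsx1 : Real.sqrt x ≤ 1 := by
    rw [show (1:ℝ) = Real.sqrt 1 by simp]
    exact Real.sqrt_le_sqrt hx1
  have hsrx : Real.sqrt r ≤ Real.sqrt x := Real.sqrt_le_sqrt hrx
  have hmem1 : (1 + Real.sqrt r) / 2 ∈ Set.Icc (2⁻¹:ℝ) 1 := by
    constructor
    · have := Real.sqrt_nonneg r; linarith
    · linarith
  have hmem2 : (1 + Real.sqrt x) / 2 ∈ Set.Icc (2⁻¹:ℝ) 1 := by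
    constructor
    · have := Real.sqrt_nonneg x; linarith
    · linarith
  rw [hHb, hHb]
  exact Real.binEntropy_strictAntiOn.antitoneOn hmem1 hmem2 (by linarith)
end
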